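/- Let k > 4 be an integer and let X₁ ⊆ ℝ³ be the first surface of Example 1. Then the germ at 0 of X₁ is ambient topologically equivalent to the germ at 0 of the straight cone over three disjoint circles C = {(x,y,t) : (x²+y²−4t²)·((x−t)²+(y−t/2)²−t²/16)·((x−t)²+(y+t/2)²−t²/16) = 0 and t ≥ 0}: there exist open neighborhoods U, V of 0 in ℝ³ and a homeomorphism h : U → V with h(0) = 0 and h(X₁ ∩ U) = C ∩ V. -/

import Mathlib

/-!
Both germs are related by one homeomorphism of `ℝ³` that preserves the height `t` and moves
points radially away from the `t`-axis. At height `t > 0` and in the direction `θ`, the first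
factor of `X₁` vanishes at exactly one radius `ρ(t, θ)`, the positive root of
`r⁴ - 4 t² cos² θ r² - t ^ k`. The homeomorphism rescales radii piecewise linearly, fixing
`r ≤ a(t, θ)` and sending `ρ` to `2 t`, the radius of the big circle of `C`; the threshold `a` lies
below `ρ` and `2 t` but above the two small circles, which are therefore fixed. As `t → 0`, both
`ρ` and `2 t` tend to `0`, so the map is continuous along the plane `t = 0`; near the positive
`t`-axis, `a` stays bounded below and the map is the identity there.
-/

open Set Metric

noncomputable section

/-- The surface `X₁` of Example 1 in `ℝ³` (coordinates `x = p 0`, `y = p 1`, `t = p 2`). -/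
def ExampleX1 (k : ℕ) : Set (EuclideanSpace ℝ (Fin 3)) :=
  {p | ((p 0 ^ 2 - 2 * p 0 * p 2 + p 1 ^ 2) * (p 0 ^ 2 + 2 * p 0 * p 2 + p 1 ^ 2) - p 2 ^ k) *
        ((p 0 - p 2) ^ 2 + (p 1 - p 2 / 2) ^ 2 - p 2 ^ 2 / 16) *
        ((p 0 - p 2) ^ 2 + (p 1 + p 2 / 2) ^ 2 - p 2 ^ 2 / 16) = 0 ∧ 0 ≤ p 2}

/-- The surface `X₂` of Example 1 in `ℝ³`. -/
def ExampleX2 (k : ℕ) : Set (EuclideanSpace ℝ (Fin 3)) :=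
  {p | ((p 0 ^ 2 - 2 * p 0 * p 2 + p 1 ^ 2) * (p 0 ^ 2 + 2 * p 0 * p 2 + p 1 ^ 2) - p 2 ^ k) *
        ((p 0 - p 2) ^ 2 + p 1 ^ 2 - p 2 ^ 2 / 16) *
        ((p 0 + p 2) ^ 2 + p 1 ^ 2 - p 2 ^ 2 / 16) = 0 ∧ 0 ≤ p 2}

/-- The straight cone `C` over three disjoint circles in the plane `t = 1`, two of them
bounding non-intersecting discs inside the disc bounded by the third one. -/
def ConeC : Set (EuclideanSpace ℝ (Fin 3)) :=
  {p | (p 0 ^ 2 + p 1 ^ 2 - 4 * p 2 ^ 2) *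
        ((p 0 - p 2) ^ 2 + (p 1 - p 2 / 2) ^ 2 - p 2 ^ 2 / 16) *
        ((p 0 - p 2) ^ 2 + (p 1 + p 2 / 2) ^ 2 - p 2 ^ 2 / 16) = 0 ∧ 0 ≤ p 2}

/-- The germs at `0` of `X` and `Y` are ambient topologically equivalent: there exist open
neighborhoods `U, V` of `0` and a homeomorphism `h : U → V` (with continuous inverse `g`)
such that `h 0 = 0` and `h (X ∩ U) = Y ∩ V`. -/
def AmbientTopEquiv {n : ℕ} (X Y : Set (EuclideanSpace ℝ (Fin n))) : Prop :=
  ∃ U V : Set (EuclideanSpace ℝ (Fin n)), IsOpen U ∧ IsOpen V ∧ 0 ∈ U ∧ 0 ∈ V ∧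
    ∃ h g : EuclideanSpace ℝ (Fin n) → EuclideanSpace ℝ (Fin n),
      ContinuousOn h U ∧ ContinuousOn g V ∧
      Set.MapsTo h U V ∧ Set.MapsTo g V U ∧
      (∀ x ∈ U, g (h x) = x) ∧ (∀ y ∈ V, h (g y) = y) ∧
      h 0 = 0 ∧ h '' (X ∩ U) = Y ∩ V

theorem AmbientTopEquiv.of_homeomorph {n : ℕ} {X Y : Set (EuclideanSpace ℝ (Fin n))}
    (e : EuclideanSpace ℝ (Fin n) ≃ₜ EuclideanSpace ℝ (Fin n)) (h0 : e 0 = 0) (hXY : e '' X = Y) :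
    AmbientTopEquiv X Y :=
  ⟨univ, univ, isOpen_univ, isOpen_univ, mem_univ 0, mem_univ 0, e, e.symm,
    e.continuous.continuousOn, e.symm.continuous.continuousOn, mapsTo_univ _ _, mapsTo_univ _ _,
    fun x _ => e.symm_apply_apply x, fun y _ => e.apply_symm_apply y, h0,
    by rw [inter_univ, inter_univ, hXY]⟩

open Filter Topology

namespace Example1

lemma sq_sub_two_mul_sub_eq_zero_iff {u β γ : ℝ} (hγ : 0 ≤ γ) (hu : 0 ≤ u)
    (hβu : u = 0 → β = 0) : u ^ 2 - 2 * β * u - γ = 0 ↔ u = β + √(β ^ 2 + γ) := by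
  rw [← sub_eq_iff_eq_add', eq_comm (a := u - β), Real.sqrt_eq_cases]
  have hdisc : ¬ β ^ 2 + γ < 0 := not_lt.2 (by positivity)
  simp only [hdisc, false_and, or_false]
  constructor
  · intro h
    refine ⟨by linear_combination h, ?_⟩
    rcases eq_or_lt_of_le hu with hu0 | hu0
    · rw [← hu0, hβu hu0.symm, sub_zero]
    · nlinarith
  · rintro ⟨h, -⟩
    linear_combination h

section Profile

variable {a b c r : ℝ}

/-- The piecewise linear map of `ℝ` that is the identity on `(-∞, a]`, sends `b` to `c` and is a
translation on `[b, ∞)` (for `a < b`). -/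
def radialProfile (a b c r : ℝ) : ℝ := r + (c - b) * projIcc 0 1 zero_le_one ((r - a) / (b - a))

lemma radialProfile_of_le (hab : a < b) (hr : r ≤ a) : radialProfile a b c r = r := by
  rw [radialProfile, projIcc_of_le_left _ (div_nonpos_of_nonpos_of_nonneg (by linarith) (by linarith))]
  simp

lemma radialProfile_of_ge (hab : a < b) (hr : b ≤ r) : radialProfile a b c r = r + (c - b) := by
  rw [radialProfile, projIcc_of_right_le _ ((one_le_div (by linarith)).2 (by linarith))]
  simp

lemma radialProfile_of_mem (hab : a < b) (har : a ≤ r) (hrb : r ≤ b) :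
    radialProfile a b c r = r + (c - b) * ((r - a) / (b - a)) := by
  rw [radialProfile, projIcc_of_mem _
    ⟨div_nonneg (by linarith) (by linarith), (div_le_one (by linarith)).2 (by linarith)⟩]

lemma radialProfile_right (hab : a < b) : radialProfile a b c b = c := by
  rw [radialProfile_of_ge hab le_rfl]; ring

@[simp]
lemma radialProfile_self (a b r : ℝ) : radialProfile a b b r = r := by
  simp [radialProfile]

lemma abs_radialProfile_sub_le (a b c r : ℝ) : |radialProfile a b c r - r| ≤ |c - b| := by
  have h := (projIcc 0 1 zero_le_one ((r - a) / (b - a))).2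
  rw [radialProfile, add_sub_cancel_left, abs_mul, abs_of_nonneg h.1]
  exact mul_le_of_le_one_right (abs_nonneg _) h.2

lemma radialProfile_sub_left (hab : a < b) (har : a ≤ r) (hrb : r ≤ b) :
    radialProfile a b c r - a = (r - a) * ((c - a) / (b - a)) := by
  rw [radialProfile_of_mem hab har hrb]
  field_simp [(sub_pos.2 hab).ne']
  ring

lemma radialProfile_pos (ha : 0 ≤ a) (hab : a < b) (hac : a < c) (hr : 0 < r) :
    0 < radialProfile a b c r := by
  rcases le_or_gt r a with hra | hra
  · rwa [radialProfile_of_le hab hra]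
  rcases le_or_gt r b with hrb | hrb
  · have := radialProfile_sub_left (c := c) hab hra.le hrb
    nlinarith [div_pos (sub_pos.2 hac) (sub_pos.2 hab)]
  · rw [radialProfile_of_ge hab hrb.le]; linarith

lemma radialProfile_radialProfile (hab : a < b) (hac : a < c) (r : ℝ) :
    radialProfile a c b (radialProfile a b c r) = r := by
  rcases le_or_gt r a with hra | hra
  · rw [radialProfile_of_le hab hra, radialProfile_of_le hac hra]
  rcases le_or_gt r b with hrb | hrb
  · have hs := div_pos (sub_pos.2 hac) (sub_pos.2 hab)
    have h₁ := radialProfile_sub_left (c := c) hab hra.le hrb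
    have h₂ : c - radialProfile a b c r = (b - r) * ((c - a) / (b - a)) := by
      rw [radialProfile_of_mem hab hra.le hrb]; field_simp [(sub_pos.2 hab).ne']; ring
    rw [radialProfile_of_mem hac (by nlinarith) (by nlinarith), radialProfile_of_mem hab hra.le hrb]
    field_simp [(sub_pos.2 hab).ne', (sub_pos.2 hac).ne']
    ring
  · rw [radialProfile_of_ge hab hrb.le, radialProfile_of_ge hac (by linarith)]
    ring

lemma _root_.ContinuousAt.radialProfile {X : Type*} [TopologicalSpace X] {f g h u : X → ℝ}
    {x : X} (hf : ContinuousAt f x) (hg : ContinuousAt g x) (hh : ContinuousAt h x)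
    (hu : ContinuousAt u x) (hfg : f x ≠ g x) :
    ContinuousAt (fun y => radialProfile (f y) (g y) (h y) (u y)) x :=
  hu.add <| (hh.sub hg).mul <| continuous_subtype_val.continuousAt.comp <|
    (continuous_projIcc).continuousAt.comp <| (hu.sub hf).div (hg.sub hf) (sub_ne_zero.2 hfg.symm)

end Profile

local notation "ℝ³" => EuclideanSpace ℝ (Fin 3)

def horizScale (s : ℝ) (p : ℝ³) : ℝ³ := !₂[s * p 0, s * p 1, p 2]

def axisDist (p : ℝ³) : ℝ := √(p 0 ^ 2 + p 1 ^ 2)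

@[simp] lemma horizScale_apply_zero (s : ℝ) (p : ℝ³) : horizScale s p 0 = s * p 0 := rfl
@[simp] lemma horizScale_apply_one (s : ℝ) (p : ℝ³) : horizScale s p 1 = s * p 1 := rfl
@[simp] lemma horizScale_apply_two (s : ℝ) (p : ℝ³) : horizScale s p 2 = p 2 := rfl

lemma ext_fin_three {p q : ℝ³} (h0 : p 0 = q 0) (h1 : p 1 = q 1) (h2 : p 2 = q 2) : p = q := by
  ext i; fin_cases i <;> assumption

@[simp] lemma horizScale_one (p : ℝ³) : horizScale 1 p = p :=
  ext_fin_three (one_mul _) (one_mul _) rfl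

lemma horizScale_horizScale (s s' : ℝ) (p : ℝ³) :
    horizScale s (horizScale s' p) = horizScale (s * s') p :=
  ext_fin_three (mul_assoc _ _ _).symm (mul_assoc _ _ _).symm rfl

lemma axisDist_nonneg (p : ℝ³) : 0 ≤ axisDist p := Real.sqrt_nonneg _

lemma axisDist_sq (p : ℝ³) : axisDist p ^ 2 = p 0 ^ 2 + p 1 ^ 2 := Real.sq_sqrt (by positivity)

lemma axisDist_eq_zero {p : ℝ³} : axisDist p = 0 ↔ p 0 = 0 ∧ p 1 = 0 := by
  rw [axisDist, Real.sqrt_eq_zero (by positivity)]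
  constructor
  · intro h; constructor <;> nlinarith [sq_nonneg (p 0), sq_nonneg (p 1)]
  · rintro ⟨h0, h1⟩; simp [h0, h1]

lemma axisDist_horizScale {s : ℝ} (hs : 0 ≤ s) (p : ℝ³) :
    axisDist (horizScale s p) = s * axisDist p := by
  have h : (s * p 0) ^ 2 + (s * p 1) ^ 2 = s ^ 2 * (p 0 ^ 2 + p 1 ^ 2) := by ring
  rw [axisDist, axisDist, horizScale_apply_zero, horizScale_apply_one, h,
    Real.sqrt_mul (sq_nonneg s), Real.sqrt_sq hs]

lemma horizScale_of_axisDist_eq_zero (s : ℝ) {p : ℝ³} (hp : axisDist p = 0) :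
    horizScale s p = p := by
  obtain ⟨h0, h1⟩ := axisDist_eq_zero.1 hp
  exact ext_fin_three (by simp [h0]) (by simp [h1]) rfl

lemma norm_horizScale_sub (s : ℝ) (p : ℝ³) : ‖horizScale s p - p‖ = |s - 1| * axisDist p := by
  rw [EuclideanSpace.norm_eq, axisDist, ← Real.sqrt_sq_eq_abs, ← Real.sqrt_mul (sq_nonneg _)]
  simp only [Fin.sum_univ_three, PiLp.sub_apply, horizScale_apply_zero, horizScale_apply_one,
    horizScale_apply_two, Real.norm_eq_abs, sq_abs]
  ring_nf

lemma continuous_horizScale : Continuous fun x : ℝ × ℝ³ => horizScale x.1 x.2 := by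
  unfold horizScale
  fun_prop

@[fun_prop]
lemma continuous_axisDist : Continuous axisDist := by
  unfold axisDist
  fun_prop

def HorizScaleInvariant (f : ℝ³ → ℝ) : Prop := ∀ s, 0 < s → ∀ p, f (horizScale s p) = f p

/-- On the axis the scale factor is the junk value `0 / 0 = 0`, which is harmless since
`horizScale s` fixes the axis. -/
def radialMap (a b c : ℝ³ → ℝ) (p : ℝ³) : ℝ³ :=
  horizScale (radialProfile (a p) (b p) (c p) (axisDist p) / axisDist p) p

/-- Conditions under which `radialMap a b c` is a homeomorphism with inverse `radialMap a c b`;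
where `b p = c p` it is the identity. -/
structure IsRadialData (a b c : ℝ³ → ℝ) : Prop where
  invariant_left : HorizScaleInvariant a
  invariant_mid : HorizScaleInvariant b
  invariant_right : HorizScaleInvariant c
  admissible : ∀ p, 0 ≤ a p ∧ a p < b p ∧ a p < c p ∨ b p = c p

section RadialMap

variable {a b c : ℝ³ → ℝ} {p : ℝ³}

@[simp] lemma radialMap_apply_two (a b c : ℝ³ → ℝ) (p : ℝ³) : radialMap a b c p 2 = p 2 := rfl

lemma horizScale_axisDist_div_self (p : ℝ³) : horizScale (axisDist p / axisDist p) p = p := by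
  rcases eq_or_ne (axisDist p) 0 with h | h
  · exact horizScale_of_axisDist_eq_zero _ h
  · rw [div_self h, horizScale_one]

lemma radialMap_of_eq (h : b p = c p) : radialMap a b c p = p := by
  rw [radialMap, h, radialProfile_self, horizScale_axisDist_div_self]

lemma norm_radialMap_sub_le (a b c : ℝ³ → ℝ) (p : ℝ³) : ‖radialMap a b c p - p‖ ≤ |c p - b p| := by
  rw [radialMap, norm_horizScale_sub]
  rcases eq_or_ne (axisDist p) 0 with h | h
  · rw [h, mul_zero]; exact abs_nonneg _
  · rw [← abs_of_nonneg (axisDist_nonneg p), ← abs_mul, abs_of_nonneg (axisDist_nonneg p),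
      sub_mul, div_mul_cancel₀ _ h, one_mul]
    exact abs_radialProfile_sub_le _ _ _ _

lemma radialMap_of_axisDist_eq_zero (h : axisDist p = 0) : radialMap a b c p = p :=
  horizScale_of_axisDist_eq_zero _ h

lemma continuousAt_radialMap (ha : ContinuousAt a p) (hb : ContinuousAt b p)
    (hc : ContinuousAt c p) (hab : a p ≠ b p) (hp : axisDist p ≠ 0) :
    ContinuousAt (radialMap a b c) p :=
  continuous_horizScale.continuousAt.comp (f := fun q => (_, q)) <|
    (((ha.radialProfile hb hc continuous_axisDist.continuousAt hab).div
      continuous_axisDist.continuousAt hp)).prodMk continuousAt_id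

lemma continuousAt_radialMap_of_eq (hb : ContinuousAt b p) (hc : ContinuousAt c p)
    (hbc : b p = c p) : ContinuousAt (radialMap a b c) p := by
  have hsub : Tendsto (fun q => radialMap a b c q - q) (𝓝 p) (𝓝 0) := by
    refine squeeze_zero_norm (norm_radialMap_sub_le a b c) ?_
    simpa [ContinuousAt, hbc] using (hc.sub hb).abs
  simpa [ContinuousAt, radialMap_of_eq hbc] using hsub.add continuousAt_id

namespace IsRadialData

lemma symm (hd : IsRadialData a b c) : IsRadialData a c b :=
  ⟨hd.invariant_left, hd.invariant_right, hd.invariant_mid, fun p =>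
    (hd.admissible p).imp (fun ⟨h₀, h₁, h₂⟩ => ⟨h₀, h₂, h₁⟩) Eq.symm⟩

lemma radialMap_of_le (hd : IsRadialData a b c) (h : axisDist p ≤ a p) : radialMap a b c p = p := by
  rcases hd.admissible p with ⟨-, hab, -⟩ | hbc
  · rw [radialMap, radialProfile_of_le hab h, horizScale_axisDist_div_self]
  · exact radialMap_of_eq hbc

lemma radialProfile_axisDist_pos (hd : IsRadialData a b c) (h : 0 < axisDist p) :
    0 < radialProfile (a p) (b p) (c p) (axisDist p) := by
  rcases hd.admissible p with ⟨ha, hab, hac⟩ | hbc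
  · exact radialProfile_pos ha hab hac h
  · rwa [hbc, radialProfile_self]

lemma axisDist_radialMap (hd : IsRadialData a b c) (p : ℝ³) :
    axisDist (radialMap a b c p) = radialProfile (a p) (b p) (c p) (axisDist p) := by
  rcases eq_or_lt_of_le (axisDist_nonneg p) with h | h
  · rw [radialMap_of_axisDist_eq_zero h.symm, ← h]
    rcases hd.admissible p with ⟨ha, hab, -⟩ | hbc
    · rw [radialProfile_of_le hab ha]
    · rw [hbc, radialProfile_self]
  · rw [radialMap, axisDist_horizScale (div_pos (hd.radialProfile_axisDist_pos h) h).le,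
      div_mul_cancel₀ _ h.ne']

lemma apply_radialMap (hd : IsRadialData a b c) {f : ℝ³ → ℝ} (hf : HorizScaleInvariant f)
    (p : ℝ³) : f (radialMap a b c p) = f p := by
  rcases eq_or_lt_of_le (axisDist_nonneg p) with h | h
  · rw [radialMap_of_axisDist_eq_zero h.symm]
  · exact hf _ (div_pos (hd.radialProfile_axisDist_pos h) h) p

lemma axisDist_radialMap_of_eq (hd : IsRadialData a b c) (h : axisDist p = b p) :
    axisDist (radialMap a b c p) = c (radialMap a b c p) := by
  rw [hd.axisDist_radialMap, hd.apply_radialMap hd.invariant_right, h]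
  rcases hd.admissible p with ⟨-, hab, -⟩ | hbc
  · exact radialProfile_right hab
  · rw [hbc, radialProfile_self]

lemma radialMap_radialMap (hd : IsRadialData a b c) (p : ℝ³) :
    radialMap a c b (radialMap a b c p) = p := by
  rcases hd.admissible p with ⟨-, hab, hac⟩ | hbc
  · rcases eq_or_lt_of_le (axisDist_nonneg p) with h | h
    · rw [radialMap_of_axisDist_eq_zero h.symm, radialMap_of_axisDist_eq_zero h.symm]
    have hφ := hd.radialProfile_axisDist_pos h
    conv_lhs => rw [radialMap, hd.apply_radialMap hd.invariant_left,
      hd.apply_radialMap hd.invariant_mid, hd.apply_radialMap hd.invariant_right,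
      hd.axisDist_radialMap, radialProfile_radialProfile hab hac, radialMap, horizScale_horizScale]
    rw [div_mul_div_cancel₀ hφ.ne', div_self h.ne', horizScale_one]
  · rw [radialMap_of_eq hbc, radialMap_of_eq hbc.symm]

lemma continuousAt_radialMap_of_eventually_le (hd : IsRadialData a b c)
    (h : ∀ᶠ q in 𝓝 p, axisDist q ≤ a q) : ContinuousAt (radialMap a b c) p :=
  continuousAt_id.congr (h.mono fun _ hq => (hd.radialMap_of_le hq).symm)

lemma image_eq (hd : IsRadialData a b c) {K : Set ℝ³} (hK : ∀ p ∈ K, 0 ≤ p 2 → axisDist p ≤ a p) :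
    radialMap a b c '' {p | 0 ≤ p 2 ∧ (axisDist p = b p ∨ p ∈ K)} =
      {p | 0 ≤ p 2 ∧ (axisDist p = c p ∨ p ∈ K)} := by
  have maps : ∀ {b c}, IsRadialData a b c → MapsTo (radialMap a b c)
      {p | 0 ≤ p 2 ∧ (axisDist p = b p ∨ p ∈ K)} {p | 0 ≤ p 2 ∧ (axisDist p = c p ∨ p ∈ K)} := by
    rintro b c hd p ⟨ht, hp | hp⟩
    · exact ⟨ht, Or.inl (hd.axisDist_radialMap_of_eq hp)⟩
    · rw [hd.radialMap_of_le (hK p hp ht)]; exact ⟨ht, Or.inr hp⟩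
  exact (InvOn.bijOn ⟨fun p _ => hd.radialMap_radialMap p, fun p _ => hd.symm.radialMap_radialMap p⟩
    (maps hd) (maps hd.symm)).image_eq

end IsRadialData

end RadialMap

section Peanut

variable {k : ℕ} {p : ℝ³}

/-- Truncated at `0` so that the homeomorphism is the identity on the half-space `t ≤ 0`. -/
def height (p : ℝ³) : ℝ := max (p 2) 0

def cosSq (p : ℝ³) : ℝ := p 0 ^ 2 / (p 0 ^ 2 + p 1 ^ 2)

/-- In polar coordinates `(r, θ)` around the axis, at height `t ≥ 0`, the first factor of `X₁`
reads `r⁴ - 2 β r² - t ^ k` with `β = peanutCoeff p`. -/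
def peanutCoeff (p : ℝ³) : ℝ := 2 * height p ^ 2 * cosSq p

/-- The positive root `r` of `r⁴ - 2 β r² - t ^ k`. -/
def peanutRadius (k : ℕ) (p : ℝ³) : ℝ := √(peanutCoeff p + √(peanutCoeff p ^ 2 + height p ^ k))

def outerRadius (p : ℝ³) : ℝ := 2 * height p

/-- Below this radius the homeomorphism is the identity; the factor `9 / 10` leaves room for the
two small circles. -/
def innerRadius (k : ℕ) (p : ℝ³) : ℝ := 9 / 10 * min (peanutRadius k p) (outerRadius p)

lemma height_nonneg (p : ℝ³) : 0 ≤ height p := le_max_right _ _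

lemma height_of_nonneg (h : 0 ≤ p 2) : height p = p 2 := max_eq_left h

@[fun_prop]
lemma continuous_height : Continuous height := by
  unfold height; fun_prop

lemma cosSq_nonneg (p : ℝ³) : 0 ≤ cosSq p := by unfold cosSq; positivity

lemma cosSq_le_one (p : ℝ³) : cosSq p ≤ 1 :=
  div_le_one_of_le₀ (le_add_of_nonneg_right (sq_nonneg _)) (by positivity)

lemma sq_eq_cosSq_mul (p : ℝ³) : p 0 ^ 2 = cosSq p * (p 0 ^ 2 + p 1 ^ 2) := by
  rcases eq_or_ne (p 0 ^ 2 + p 1 ^ 2) 0 with h | h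
  · rw [h, mul_zero]; nlinarith [sq_nonneg (p 0), sq_nonneg (p 1)]
  · rw [cosSq, div_mul_cancel₀ _ h]

lemma peanutCoeff_nonneg (p : ℝ³) : 0 ≤ peanutCoeff p := by
  have := cosSq_nonneg p; unfold peanutCoeff; positivity

lemma peanutRadius_nonneg (k : ℕ) (p : ℝ³) : 0 ≤ peanutRadius k p := Real.sqrt_nonneg _

lemma peanutRadius_sq (k : ℕ) (p : ℝ³) :
    peanutRadius k p ^ 2 = peanutCoeff p + √(peanutCoeff p ^ 2 + height p ^ k) :=
  Real.sq_sqrt (by have := peanutCoeff_nonneg p; positivity)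

lemma two_mul_peanutCoeff_le_peanutRadius_sq (k : ℕ) (p : ℝ³) :
    2 * peanutCoeff p ≤ peanutRadius k p ^ 2 := by
  have h : peanutCoeff p ≤ √(peanutCoeff p ^ 2 + height p ^ k) :=
    Real.le_sqrt_of_sq_le (le_add_of_nonneg_right (pow_nonneg (height_nonneg p) k))
  rw [peanutRadius_sq]; linarith

lemma sqrt_sqrt_height_pow_le_peanutRadius (k : ℕ) (p : ℝ³) :
    √√(height p ^ k) ≤ peanutRadius k p :=
  Real.sqrt_le_sqrt <| le_add_of_nonneg_of_le (peanutCoeff_nonneg p) <|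
    Real.sqrt_le_sqrt (le_add_of_nonneg_left (sq_nonneg _))

lemma peanutRadius_le_sqrt (k : ℕ) (p : ℝ³) :
    peanutRadius k p ≤ √(4 * height p ^ 2 + √(height p ^ k)) := by
  have hβ : peanutCoeff p ≤ 2 * height p ^ 2 := by
    unfold peanutCoeff
    nlinarith [cosSq_le_one p, sq_nonneg (height p)]
  have hroot : √(peanutCoeff p ^ 2 + height p ^ k) ≤ peanutCoeff p + √(height p ^ k) := by
    rw [Real.sqrt_le_left (by have := peanutCoeff_nonneg p; positivity)]
    nlinarith [peanutCoeff_nonneg p, Real.sqrt_nonneg (height p ^ k),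
      Real.sq_sqrt (pow_nonneg (height_nonneg p) k)]
  exact Real.sqrt_le_sqrt (by linarith)

lemma peanutRadius_pos (h : 0 < height p) : 0 < peanutRadius k p :=
  (Real.sqrt_pos.2 (Real.sqrt_pos.2 (pow_pos h k))).trans_le
    (sqrt_sqrt_height_pow_le_peanutRadius k p)

lemma peanutRadius_of_height_eq_zero (hk : k ≠ 0) (h : height p = 0) : peanutRadius k p = 0 :=
  le_antisymm ((peanutRadius_le_sqrt k p).trans_eq (by simp [h, hk])) (Real.sqrt_nonneg _)

lemma horizScaleInvariant_height : HorizScaleInvariant height := fun _ _ _ => rfl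

lemma horizScaleInvariant_cosSq : HorizScaleInvariant cosSq := by
  intro s hs p
  simp only [cosSq, horizScale_apply_zero, horizScale_apply_one, mul_pow, ← mul_add]
  exact mul_div_mul_left _ _ (pow_ne_zero 2 hs.ne')

lemma horizScaleInvariant_peanutRadius (k : ℕ) : HorizScaleInvariant (peanutRadius k) := by
  intro s hs p
  simp only [peanutRadius, peanutCoeff, horizScaleInvariant_height s hs p,
    horizScaleInvariant_cosSq s hs p]

lemma horizScaleInvariant_outerRadius : HorizScaleInvariant outerRadius := fun _ _ _ => rfl

lemma horizScaleInvariant_innerRadius (k : ℕ) : HorizScaleInvariant (innerRadius k) := by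
  intro s hs p
  simp only [innerRadius, horizScaleInvariant_peanutRadius k s hs p,
    horizScaleInvariant_outerRadius s hs p]

lemma innerRadius_nonneg (k : ℕ) (p : ℝ³) : 0 ≤ innerRadius k p := by
  have := height_nonneg p
  unfold innerRadius outerRadius peanutRadius
  positivity

lemma innerRadius_lt (h : 0 < height p) :
    innerRadius k p < peanutRadius k p ∧ innerRadius k p < outerRadius p := by
  have hρ := peanutRadius_pos (k := k) h
  have hout : 0 < outerRadius p := by unfold outerRadius; positivity
  unfold innerRadius
  constructor
  · linarith [min_le_left (peanutRadius k p) (outerRadius p)]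
  · linarith [min_le_right (peanutRadius k p) (outerRadius p)]

lemma peanutRadius_eq_outerRadius (hk : k ≠ 0) (h : height p = 0) :
    peanutRadius k p = outerRadius p := by
  rw [peanutRadius_of_height_eq_zero hk h, outerRadius, h, mul_zero]

lemma isRadialData_peanut (hk : k ≠ 0) :
    IsRadialData (innerRadius k) (peanutRadius k) outerRadius := by
  refine ⟨horizScaleInvariant_innerRadius k, horizScaleInvariant_peanutRadius k,
    horizScaleInvariant_outerRadius, fun p => ?_⟩
  rcases eq_or_lt_of_le (height_nonneg p) with h | h
  · exact .inr (peanutRadius_eq_outerRadius hk h.symm)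
  · exact .inl ⟨innerRadius_nonneg k p, innerRadius_lt h⟩

lemma continuousAt_peanutRadius_of_height_eq_zero (hk : k ≠ 0) (h : height p = 0) :
    ContinuousAt (peanutRadius k) p := by
  have hbound : Continuous fun q => √(4 * height q ^ 2 + √(height q ^ k)) := by
    fun_prop
  have hlim : Tendsto (fun q => √(4 * height q ^ 2 + √(height q ^ k))) (𝓝 p) (𝓝 0) := by
    simpa [h, hk] using hbound.tendsto p
  rw [ContinuousAt, peanutRadius_of_height_eq_zero hk h]
  exact tendsto_of_tendsto_of_tendsto_of_le_of_le tendsto_const_nhds hlim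
    (fun q => Real.sqrt_nonneg _) (fun q => peanutRadius_le_sqrt k q)

lemma continuousAt_peanutRadius_of_axisDist_ne_zero (h : axisDist p ≠ 0) :
    ContinuousAt (peanutRadius k) p := by
  have hden : p 0 ^ 2 + p 1 ^ 2 ≠ 0 := by rw [← axisDist_sq]; exact pow_ne_zero 2 h
  have hcos : ContinuousAt cosSq p := by
    unfold cosSq
    exact ContinuousAt.div (by fun_prop) (by fun_prop) hden
  unfold peanutRadius peanutCoeff
  have := continuous_height.continuousAt (x := p)
  fun_prop

lemma eventually_axisDist_le_innerRadius (hp : 0 < height p) (h : axisDist p = 0) :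
    ∀ᶠ q in 𝓝 p, axisDist q ≤ innerRadius k q := by
  have hlow : Continuous fun q => 9 / 10 * min (√√(height q ^ k)) (outerRadius q) - axisDist q := by
    unfold outerRadius; fun_prop
  have hpos : 0 < 9 / 10 * min (√√(height p ^ k)) (outerRadius p) - axisDist p := by
    rw [h, sub_zero, outerRadius]
    have := Real.sqrt_pos.2 (Real.sqrt_pos.2 (pow_pos hp k))
    positivity
  filter_upwards [hlow.continuousAt.eventually (lt_mem_nhds hpos)] with q hq
  have := min_le_min_right (outerRadius q) (sqrt_sqrt_height_pow_le_peanutRadius k q)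
  unfold innerRadius
  linarith

lemma continuous_radialMap_peanut (hk : k ≠ 0) :
    Continuous (radialMap (innerRadius k) (peanutRadius k) outerRadius) ∧
      Continuous (radialMap (innerRadius k) outerRadius (peanutRadius k)) := by
  simp only [continuous_iff_continuousAt, ← forall_and]
  intro p
  have hd := isRadialData_peanut hk
  have hout : ContinuousAt outerRadius p := by unfold outerRadius; fun_prop
  rcases eq_or_lt_of_le (height_nonneg p) with h | h
  · have hρ := continuousAt_peanutRadius_of_height_eq_zero hk h.symm
    have heq := peanutRadius_eq_outerRadius hk h.symm
    exact ⟨continuousAt_radialMap_of_eq hρ hout heq, continuousAt_radialMap_of_eq hout hρ heq.symm⟩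
  rcases eq_or_ne (axisDist p) 0 with hr | hr
  · have hnear := eventually_axisDist_le_innerRadius (k := k) h hr
    exact ⟨hd.continuousAt_radialMap_of_eventually_le hnear,
      hd.symm.continuousAt_radialMap_of_eventually_le hnear⟩
  · have hρ := continuousAt_peanutRadius_of_axisDist_ne_zero (k := k) hr
    have hin : ContinuousAt (innerRadius k) p := by unfold innerRadius; fun_prop
    obtain ⟨hlt₁, hlt₂⟩ := innerRadius_lt (k := k) h
    exact ⟨continuousAt_radialMap hin hρ hout hlt₁.ne hr,
      continuousAt_radialMap hin hout hρ hlt₂.ne hr⟩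

def peanutHomeomorph (hk : k ≠ 0) : ℝ³ ≃ₜ ℝ³ where
  toFun := radialMap (innerRadius k) (peanutRadius k) outerRadius
  invFun := radialMap (innerRadius k) outerRadius (peanutRadius k)
  left_inv := (isRadialData_peanut hk).radialMap_radialMap
  right_inv := (isRadialData_peanut hk).symm.radialMap_radialMap
  continuous_toFun := (continuous_radialMap_peanut hk).1
  continuous_invFun := (continuous_radialMap_peanut hk).2

end Peanut

def smallCones : Set ℝ³ :=
  {p | ((p 0 - p 2) ^ 2 + (p 1 - p 2 / 2) ^ 2 - p 2 ^ 2 / 16) *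
    ((p 0 - p 2) ^ 2 + (p 1 + p 2 / 2) ^ 2 - p 2 ^ 2 / 16) = 0}

section Surfaces

variable {k : ℕ} {p : ℝ³}

lemma peanut_eq_zero_iff (ht : 0 ≤ p 2) :
    (p 0 ^ 2 - 2 * p 0 * p 2 + p 1 ^ 2) * (p 0 ^ 2 + 2 * p 0 * p 2 + p 1 ^ 2) - p 2 ^ k = 0 ↔
      axisDist p = peanutRadius k p := by
  have hpoly : (p 0 ^ 2 - 2 * p 0 * p 2 + p 1 ^ 2) * (p 0 ^ 2 + 2 * p 0 * p 2 + p 1 ^ 2) - p 2 ^ k =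
      (p 0 ^ 2 + p 1 ^ 2) ^ 2 - 2 * peanutCoeff p * (p 0 ^ 2 + p 1 ^ 2) - height p ^ k := by
    rw [peanutCoeff, height_of_nonneg ht]
    linear_combination (-4 * p 2 ^ 2) * sq_eq_cosSq_mul p
  have hβu : p 0 ^ 2 + p 1 ^ 2 = 0 → peanutCoeff p = 0 := fun h => by
    rw [peanutCoeff, cosSq, h, div_zero, mul_zero]
  rw [hpoly, sq_sub_two_mul_sub_eq_zero_iff
    (pow_nonneg (height_nonneg p) k) (by positivity) hβu, ← peanutRadius_sq,
    axisDist, Real.sqrt_eq_iff_eq_sq (by positivity) (peanutRadius_nonneg k p)]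

lemma outerCircle_eq_zero_iff (ht : 0 ≤ p 2) :
    p 0 ^ 2 + p 1 ^ 2 - 4 * p 2 ^ 2 = 0 ↔ axisDist p = outerRadius p := by
  rw [outerRadius, height_of_nonneg ht, axisDist, Real.sqrt_eq_iff_eq_sq (by positivity)
    (by positivity), sub_eq_zero]
  ring_nf

/-- The disc of centre `(9 t / 10, 0)` and radius `9 t / 10` contains both small circles. -/
lemma sq_add_sq_le_of_mem_smallCones (hp : p ∈ smallCones) :
    p 0 ^ 2 + p 1 ^ 2 ≤ 9 / 5 * p 2 * p 0 := by
  rcases mul_eq_zero.1 hp with h | h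
  · nlinarith [sq_nonneg (p 2 / 2 - ((p 0 - p 2) / 5 + (p 1 - p 2 / 2))),
      sq_nonneg ((p 0 - p 2) - (p 1 - p 2 / 2) / 5)]
  · nlinarith [sq_nonneg (p 2 / 2 - ((p 0 - p 2) / 5 - (p 1 + p 2 / 2))),
      sq_nonneg ((p 0 - p 2) + (p 1 + p 2 / 2) / 5)]

lemma axisDist_le_innerRadius_of_mem_smallCones (hp : p ∈ smallCones) (ht : 0 ≤ p 2) :
    axisDist p ≤ innerRadius k p := by
  have hsq := sq_add_sq_le_of_mem_smallCones hp
  rw [← axisDist_sq] at hsq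
  have hx : p 0 ≤ axisDist p := Real.le_sqrt_of_sq_le (le_add_of_nonneg_right (sq_nonneg _))
  have hr := axisDist_nonneg p
  rw [innerRadius, outerRadius, height_of_nonneg ht, mul_min_of_nonneg _ _ (by norm_num), le_min_iff]
  refine ⟨?_, by nlinarith⟩
  rcases eq_or_lt_of_le hr with h0 | h0
  · rw [← h0]; exact mul_nonneg (by norm_num) (peanutRadius_nonneg k p)
  have hρ : 4 * p 2 ^ 2 * cosSq p ≤ peanutRadius k p ^ 2 := by
    have := two_mul_peanutCoeff_le_peanutRadius_sq k p
    rw [peanutCoeff, height_of_nonneg ht] at this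
    linarith
  have hw := sq_eq_cosSq_mul p
  rw [← axisDist_sq] at hw
  have h4 : (axisDist p ^ 2) ^ 2 ≤ 81 / 25 * p 2 ^ 2 * p 0 ^ 2 := by
    nlinarith [pow_le_pow_left₀ (sq_nonneg (axisDist p)) hsq 2]
  have h2 : axisDist p ^ 2 ≤ (9 / 10 * peanutRadius k p) ^ 2 := by
    have hr2 : 0 < axisDist p ^ 2 := by positivity
    nlinarith
  exact (pow_le_pow_iff_left₀ hr (mul_nonneg (by norm_num) (peanutRadius_nonneg k p))
    two_ne_zero).1 h2

lemma exampleX1_eq (k : ℕ) :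
    ExampleX1 k = {p | 0 ≤ p 2 ∧ (axisDist p = peanutRadius k p ∨ p ∈ smallCones)} := by
  ext p
  simp only [ExampleX1, smallCones, mem_ofPred_eq]
  rw [mul_assoc, mul_eq_zero, and_comm]
  exact and_congr_right fun ht => or_congr_left (peanut_eq_zero_iff ht)

lemma coneC_eq : ConeC = {p | 0 ≤ p 2 ∧ (axisDist p = outerRadius p ∨ p ∈ smallCones)} := by
  ext p
  simp only [ConeC, smallCones, mem_ofPred_eq]
  rw [mul_assoc, mul_eq_zero, and_comm]
  exact and_congr_right fun ht => or_congr_left (outerCircle_eq_zero_iff ht)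

end Surfaces

end Example1

theorem example1_X1_top_equiv_cone (k : ℕ) (hk : 4 < k) :
    AmbientTopEquiv (ExampleX1 k) ConeC := by
  have hk₀ : k ≠ 0 := by omega
  refine AmbientTopEquiv.of_homeomorph (Example1.peanutHomeomorph hk₀)
    (Example1.radialMap_of_axisDist_eq_zero (by simp [Example1.axisDist])) ?_
  rw [Example1.exampleX1_eq, Example1.coneC_eq]
  exact (Example1.isRadialData_peanut hk₀).image_eq fun _ =>
    Example1.axisDist_le_innerRadius_of_mem_smallCones
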